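/- Let n, N be positive integers with n ≤ N/3 and let B ∈ [0, 1/n]. Define f : [0, n]² → ℝ by f(x, y) = x·log(n²/(N·x)) + y·log(n²/(N·y)) + 2n·( h((n−x)/n) + h((n−y)/n) ) + N·( h((N−2n+x)/N) + h((N−2n+y)/N) ) + B·x·y, with the terms x·log(n²/(N·x)) and h at 0 interpreted by the convention 0·log∞ = 0. Then f is continuous on [0, n]², and there is an absolute constant C < ∞ such that f attains its maximum over [0, n]² at a point (x*, y*) lying in the square [n²/N, (n²/N)·(1 + C·n/N)]². -/

import Mathlib

/-!
Write `f(x, y) = g(x) + g(y) + Bxy`. At a maximizer `(a, b)` the coordinate `a` maximizes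
`x ↦ g(x) + Bb·x` on `[0, n]`, and `g'(x) = log r(x)` with `r(x) = (n - x)² / (x(N - 2n + x))`.
Since `r(x) > 1` exactly for `x < n²/N`, the maximizer is at least `n²/N`. Because `Bb ≤ 1` and
`r < 1/3 < e⁻¹` beyond `9n²/N`, both coordinates are at most `9n²/N`; this in turn gives
`Bb ≤ 9n/N`, and `log r ≤ r - 1 < -9n/N` beyond `(n²/N)(1 + 81n/N)`.
-/

open Real

noncomputable section

/-- The entropy-type function h(x) = x log(1/x) (with h(0) = 0, using `Real.log 0 = 0`). -/
def hfun (x : ℝ) : ℝ := x * Real.log (1 / x)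

/-- The entropy–energy functional of the dense above-boundary claim:
`f(x,y) = x log(n²/(Nx)) + y log(n²/(Ny)) + 2n(h((n−x)/n) + h((n−y)/n))
          + N(h((N−2n+x)/N) + h((N−2n+y)/N)) + Bxy`,
with the conventions `0 log ∞ = 0` (realized by `Real.log 0 = 0`). -/
def fQ (n N : ℕ) (B x y : ℝ) : ℝ :=
  x * Real.log ((n : ℝ) ^ 2 / (N * x)) + y * Real.log ((n : ℝ) ^ 2 / (N * y))
    + 2 * n * (hfun (((n : ℝ) - x) / n) + hfun (((n : ℝ) - y) / n))
    + N * (hfun (((N : ℝ) - 2 * n + x) / N) + hfun (((N : ℝ) - 2 * n + y) / N))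
    + B * x * y

open Set

theorem IsMaxOn.le_of_deriv_neg {f : ℝ → ℝ} {l u a t : ℝ} (hmax : IsMaxOn f (Icc l u) a)
    (ha : a ∈ Icc l u) (hf : ContinuousOn f (Icc l u)) (hlt : l ≤ t)
    (hneg : ∀ x ∈ Ioo t a, deriv f x < 0) : a ≤ t := by
  by_contra! hta
  have hanti : StrictAntiOn f (Icc t a) :=
    strictAntiOn_of_deriv_neg (convex_Icc t a) (hf.mono (Icc_subset_Icc hlt ha.2))
      (by rwa [interior_Icc])
  exact (hanti (left_mem_Icc.2 hta.le) (right_mem_Icc.2 hta.le) hta).not_ge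
    (hmax ⟨hlt, hta.le.trans ha.2⟩)

theorem IsMaxOn.le_of_deriv_pos {f : ℝ → ℝ} {l u a t : ℝ} (hmax : IsMaxOn f (Icc l u) a)
    (ha : a ∈ Icc l u) (hf : ContinuousOn f (Icc l u)) (htu : t ≤ u)
    (hpos : ∀ x ∈ Ioo a t, 0 < deriv f x) : t ≤ a := by
  by_contra! hat
  have hmono : StrictMonoOn f (Icc a t) :=
    strictMonoOn_of_deriv_pos (convex_Icc a t) (hf.mono (Icc_subset_Icc ha.1 htu))
      (by rwa [interior_Icc])
  exact (hmono (left_mem_Icc.2 hat.le) (right_mem_Icc.2 hat.le) hat).not_ge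
    (hmax ⟨ha.1.trans hat.le, htu⟩)

theorem mul_log_div_self {A : ℝ} (hA : A ≠ 0) (x : ℝ) :
    x * log (A / x) = x * log A + negMulLog x := by
  rcases eq_or_ne x 0 with rfl | hx
  · simp
  · rw [log_div hA hx, negMulLog]; ring

theorem hfun_eq_negMulLog : hfun = negMulLog := by
  ext x
  rw [hfun, negMulLog, one_div, log_inv]; ring

def fQPart (n N x : ℝ) : ℝ :=
  x * log (n ^ 2 / N) + negMulLog x + 2 * n * negMulLog ((n - x) / n)
    + N * negMulLog ((N - 2 * n + x) / N)

theorem fQ_eq_fQPart {n N : ℕ} (hn : n ≠ 0) (hN : N ≠ 0) (B x y : ℝ) :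
    fQ n N B x y = fQPart n N x + fQPart n N y + B * x * y := by
  have hA : (n : ℝ) ^ 2 / N ≠ 0 := by positivity
  simp only [fQ, fQPart, hfun_eq_negMulLog, ← div_div, mul_log_div_self hA]
  ring

theorem fQ_comm (n N : ℕ) (B x y : ℝ) : fQ n N B x y = fQ n N B y x := by
  unfold fQ; ring

@[fun_prop]
theorem continuous_fQPart (n N : ℝ) : Continuous (fQPart n N) := by
  unfold fQPart; fun_prop

theorem hasDerivAt_fQPart {n N x : ℝ} (hx : 0 < x) (hxn : x < n) (hxN : 2 * n < N + x) :
    HasDerivAt (fQPart n N) (log ((n - x) ^ 2 / (x * (N - 2 * n + x)))) x := by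
  have hn : 0 < n := hx.trans hxn
  have hN : 0 < N := by linarith
  have hnx : 0 < n - x := by linarith
  have hW : 0 < N - 2 * n + x := by linarith
  have hlin : HasDerivAt (fun x => x * log (n ^ 2 / N)) (log (n ^ 2 / N)) x := by
    simpa using (hasDerivAt_id x).mul_const (log (n ^ 2 / N))
  have hn_term : HasDerivAt (fun x => 2 * n * negMulLog ((n - x) / n))
      (2 * n * ((-log ((n - x) / n) - 1) * (-1 / n))) x :=
    ((hasDerivAt_negMulLog (by positivity)).comp x
      (((hasDerivAt_id x).const_sub n).div_const n)).const_mul (2 * n)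
  have hN_term : HasDerivAt (fun x => N * negMulLog ((N - 2 * n + x) / N))
      (N * ((-log ((N - 2 * n + x) / N) - 1) * (1 / N))) x :=
    ((hasDerivAt_negMulLog (by positivity)).comp x
      (((hasDerivAt_id x).const_add (N - 2 * n)).div_const N)).const_mul N
  refine (((hlin.add (hasDerivAt_negMulLog hx.ne')).add hn_term).add hN_term).congr_deriv ?_
  rw [log_div (pow_pos hnx 2).ne' (mul_pos hx hW).ne', log_mul hx.ne' hW.ne',
    log_div (pow_pos hn 2).ne' hN.ne', log_div hnx.ne' hn.ne', log_div hW.ne' hN.ne']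
  simp only [log_pow]
  field_simp
  push_cast
  ring

section FQPartMaximizer

variable {n N c a : ℝ}

theorem deriv_fQPart_add_mul {x : ℝ} (hx : 0 < x) (hxn : x < n) (hxN : 2 * n < N + x) :
    deriv (fun x => fQPart n N x + c * x) x = log ((n - x) ^ 2 / (x * (N - 2 * n + x))) + c :=
  ((hasDerivAt_fQPart hx hxn hxN).add ((hasDerivAt_id x).const_mul c)).deriv.trans (by simp)

variable (hn : 0 < n) (hN : 3 * n ≤ N)
  (hmax : IsMaxOn (fun x => fQPart n N x + c * x) (Icc 0 n) a) (ha : a ∈ Icc 0 n)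
include hn hN hmax ha

theorem sq_div_le_of_isMaxOn (hc : 0 ≤ c) : n ^ 2 / N ≤ a := by
  have hNpos : 0 < N := by linarith
  refine hmax.le_of_deriv_pos ha (by fun_prop) ?_ fun x hx => ?_
  · rw [div_le_iff₀ hNpos]; nlinarith
  obtain ⟨hax, hxt⟩ := hx
  have hx0 : 0 < x := ha.1.trans_lt hax
  have hxN : x * N < n ^ 2 := (lt_div_iff₀ hNpos).1 hxt
  have hxn : x < n := by nlinarith
  have hW : 0 < N - 2 * n + x := by linarith
  rw [deriv_fQPart_add_mul hx0 hxn (by linarith)]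
  have hr : 1 < (n - x) ^ 2 / (x * (N - 2 * n + x)) := by
    rw [one_lt_div (by positivity)]; nlinarith
  linarith [log_pos hr]

theorem le_nine_mul_sq_div_of_isMaxOn (hc : c ≤ 1) : a ≤ 9 * n ^ 2 / N := by
  have hNpos : 0 < N := by linarith
  refine hmax.le_of_deriv_neg ha (by fun_prop) (by positivity) fun x hx => ?_
  obtain ⟨htx, hxa⟩ := hx
  have hx0 : 0 < x := lt_of_le_of_lt (by positivity) htx
  have hxN : 9 * n ^ 2 < x * N := (div_lt_iff₀ hNpos).1 htx
  have hxn : x < n := hxa.trans_le ha.2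
  have hnx : 0 < n - x := by linarith
  have hW : 0 < N - 2 * n + x := by linarith
  rw [deriv_fQPart_add_mul hx0 hxn (by linarith)]
  have hr : (n - x) ^ 2 / (x * (N - 2 * n + x)) < 1 / 3 := by
    rw [div_lt_iff₀ (by positivity)]; nlinarith
  have hlog : log ((n - x) ^ 2 / (x * (N - 2 * n + x))) < -1 := by
    calc log ((n - x) ^ 2 / (x * (N - 2 * n + x))) < log (1 / 3) :=
          log_lt_log (by positivity) hr
      _ = -log 3 := by rw [one_div, log_inv]
      _ < -1 := by linarith [log_three_gt_d9]
  linarith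

theorem le_sq_div_mul_of_isMaxOn (hc : c ≤ 9 * n / N) (ha9 : a ≤ 9 * n ^ 2 / N) :
    a ≤ n ^ 2 / N * (1 + 81 * n / N) := by
  have hNpos : 0 < N := by linarith
  refine hmax.le_of_deriv_neg ha (by fun_prop) (by positivity) fun x hx => ?_
  obtain ⟨htx, hxa⟩ := hx
  have hx0 : 0 < x := lt_of_le_of_lt (by positivity) htx
  have hxN : n ^ 2 * N + 81 * n ^ 3 < x * N ^ 2 := by
    rw [show n ^ 2 / N * (1 + 81 * n / N) = (n ^ 2 * N + 81 * n ^ 3) / N ^ 2 by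
      field_simp] at htx
    exact (div_lt_iff₀ (by positivity)).1 htx
  have hx9 : x * N ≤ 9 * n ^ 2 := (le_div_iff₀ hNpos).1 (hxa.le.trans ha9)
  have hxn : x < n := hxa.trans_le ha.2
  have hnx : 0 < n - x := by linarith
  have hW : 0 < N - 2 * n + x := by linarith
  rw [deriv_fQPart_add_mul hx0 hxn (by linarith)]
  have hkey : N * (n - x) ^ 2 < (N - 9 * n) * (x * (N - 2 * n + x)) := by
    nlinarith [mul_pos (mul_pos hn hn) hx0, mul_pos (mul_pos hn hx0) hnx]
  have hr : (n - x) ^ 2 / (x * (N - 2 * n + x)) < 1 - 9 * n / N := by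
    rw [div_lt_iff₀ (by positivity),
      show (1 - 9 * n / N) * (x * (N - 2 * n + x)) = (N - 9 * n) * (x * (N - 2 * n + x)) / N by
        field_simp, lt_div_iff₀ hNpos]
    linarith
  have hr0 : 0 < (n - x) ^ 2 / (x * (N - 2 * n + x)) := by positivity
  linarith [log_le_sub_one_of_pos hr0]

end FQPartMaximizer

theorem continuous_fQ {n N : ℕ} (hn : n ≠ 0) (hN : N ≠ 0) (B : ℝ) :
    Continuous (fun p : ℝ × ℝ => fQ n N B p.1 p.2) := by
  simp only [fQ_eq_fQPart hn hN]
  fun_prop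

section FQMaximizer

variable {n N : ℕ} {B a b : ℝ} {s : Set ℝ}

theorem isMaxOn_fQ_swap (hmax : IsMaxOn (fun p : ℝ × ℝ => fQ n N B p.1 p.2) (s ×ˢ s) (a, b)) :
    IsMaxOn (fun p : ℝ × ℝ => fQ n N B p.1 p.2) (s ×ˢ s) (b, a) := fun p hp => by
  have hle : fQ n N B p.2 p.1 ≤ fQ n N B a b := hmax (mk_mem_prod hp.2 hp.1)
  rw [fQ_comm n N B p.2, fQ_comm n N B a] at hle
  exact hle

theorem isMaxOn_fQPart_add_mul_of_isMaxOn_fQ (hn : n ≠ 0) (hN : N ≠ 0)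
    (hmax : IsMaxOn (fun p : ℝ × ℝ => fQ n N B p.1 p.2) (s ×ˢ s) (a, b)) (hb : b ∈ s) :
    IsMaxOn (fun x => fQPart n N x + B * b * x) s a := fun x hx => by
  have hle : fQ n N B x b ≤ fQ n N B a b := hmax (mk_mem_prod hx hb)
  simp only [mem_ofPred_eq, fQ_eq_fQPart hn hN] at hle ⊢
  linarith

theorem mem_Icc_of_isMaxOn_fQ (hn : 0 < n) (h3 : 3 * n ≤ N) (hB : B ∈ Icc (0 : ℝ) (1 / (n : ℝ)))
    (hmax : IsMaxOn (fun p : ℝ × ℝ => fQ n N B p.1 p.2) (Icc (0 : ℝ) n ×ˢ Icc (0 : ℝ) n) (a, b))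
    (hab : (a, b) ∈ Icc (0 : ℝ) n ×ˢ Icc (0 : ℝ) n) :
    a ∈ Icc ((n : ℝ) ^ 2 / N) ((n : ℝ) ^ 2 / N * (1 + 81 * n / N)) := by
  have hn' : (0 : ℝ) < n := by exact_mod_cast hn
  have h3' : 3 * (n : ℝ) ≤ N := by exact_mod_cast h3
  have hN : N ≠ 0 := by omega
  obtain ⟨ha, hb⟩ := hab
  have hmax_a := isMaxOn_fQPart_add_mul_of_isMaxOn_fQ hn.ne' hN hmax hb
  have hmax_b := isMaxOn_fQPart_add_mul_of_isMaxOn_fQ hn.ne' hN (isMaxOn_fQ_swap hmax) ha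
  have hB_mul : ∀ z, 0 ≤ z → B * z ≤ z / n := fun z hz => by
    simpa [div_eq_inv_mul] using mul_le_mul_of_nonneg_right hB.2 hz
  have hB_mul_le_one : ∀ z ∈ Icc (0 : ℝ) n, B * z ≤ 1 := fun z hz =>
    (hB_mul z hz.1).trans ((div_le_one hn').2 hz.2)
  have hb9 : b ≤ 9 * n ^ 2 / N :=
    le_nine_mul_sq_div_of_isMaxOn hn' h3' hmax_b hb (hB_mul_le_one a ha)
  have hBb : B * b ≤ 9 * n / N := (hB_mul b hb.1).trans <| by
    rw [div_le_iff₀ hn']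
    calc b ≤ 9 * n ^ 2 / N := hb9
      _ = 9 * n / N * n := by ring
  exact ⟨sq_div_le_of_isMaxOn hn' h3' hmax_a ha (mul_nonneg hB.1 hb.1),
    le_sq_div_mul_of_isMaxOn hn' h3' hmax_a ha hBb
      (le_nine_mul_sq_div_of_isMaxOn hn' h3' hmax_a ha (hB_mul_le_one b hb))⟩

end FQMaximizer

/-- **Location of the maximizer.**  For positive integers n ≤ N/3 and any B ∈ [0, 1/n],
the function `fQ` is continuous on [0,n]², and there is an absolute constant C < ∞ such
that `fQ` attains its maximum over [0,n]² at a point of the square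
`[n²/N, (n²/N)(1 + Cn/N)]²`. -/
theorem fQ_max_location :
    ∃ C : ℝ, 0 < C ∧ ∀ (n N : ℕ) (B : ℝ), 0 < n → 0 < N → 3 * n ≤ N →
      B ∈ Set.Icc (0 : ℝ) (1 / (n : ℝ)) →
      ContinuousOn (fun p : ℝ × ℝ => fQ n N B p.1 p.2)
          (Set.Icc (0 : ℝ) (n : ℝ) ×ˢ Set.Icc (0 : ℝ) (n : ℝ)) ∧
      ∃ x y : ℝ,
        x ∈ Set.Icc ((n : ℝ) ^ 2 / N) ((n : ℝ) ^ 2 / N * (1 + C * n / N)) ∧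
        y ∈ Set.Icc ((n : ℝ) ^ 2 / N) ((n : ℝ) ^ 2 / N * (1 + C * n / N)) ∧
        ∀ p ∈ Set.Icc (0 : ℝ) (n : ℝ) ×ˢ Set.Icc (0 : ℝ) (n : ℝ),
          fQ n N B p.1 p.2 ≤ fQ n N B x y := by
  refine ⟨81, by norm_num, fun n N B hn hN h3 hB => ?_⟩
  have hcont := continuous_fQ hn.ne' hN.ne' B
  have hne : (Icc (0 : ℝ) n ×ˢ Icc (0 : ℝ) n).Nonempty :=
    ⟨(0, 0), left_mem_Icc.2 n.cast_nonneg, left_mem_Icc.2 n.cast_nonneg⟩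
  obtain ⟨⟨a, b⟩, hab, hmax⟩ :=
    (isCompact_Icc.prod isCompact_Icc).exists_isMaxOn hne hcont.continuousOn
  exact ⟨hcont.continuousOn, a, b, mem_Icc_of_isMaxOn_fQ hn h3 hB hmax hab,
    mem_Icc_of_isMaxOn_fQ hn h3 hB (isMaxOn_fQ_swap hmax) ⟨hab.2, hab.1⟩, hmax⟩

end
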